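/- arXiv:1812.01913 — 3 statements merged into one kernel-verified Lean document; each statement's English description precedes it below -/
import Mathlib

section
/- Let k be a field and n ≥ 1. In the polynomial ring k[x_1,…,x_n,y_1,…,y_n], the ideal generated by all 2×2 minors x_i·y_j − x_j·y_i (for 1 ≤ i < j ≤ n) of the generic 2×n matrix with rows (x_1,…,x_n) and (y_1,…,y_n) is a prime ideal. (This is the paper's claim, in the proof that the singular locus C^{sing}_{a,b} is reduced and irreducible, that the equations c_0 = 0, d_0 = 0, c_i d_j − c_j d_i = 0 define a reduced and irreducible subscheme.) -/
/-!
The ideal is the kernel of `x i ↦ t i, y i ↦ s * t i` (with `t i = X (some i)` and `s = X none`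
in `MvPolynomial (Option σ) R`), a map into a polynomial ring, hence it is prime over a domain.
Modulo the ideal `x i * y j = x j * y i`, so the class of a monomial `x^A y^B` depends only on the
multiset `A + B` and on `card B`; these are exactly what its image `s ^ card B * t ^ (A + B)`
records. Sending every monomial of the target to the class of a monomial above it therefore gives
a linear left inverse of the induced map on the quotient.
-/

open MvPolynomial Multiset

namespace Multiset

variable {σ M : Type*} [CommMonoid M] {a b : σ → M}

theorem exists_add_cons_eq_and_prod_map_mul_prod_map_eq (hab : ∀ i j, a i * b j = a j * b i)
    {A B : Multiset σ} {j : σ} (hj : j ∈ A + B) (hB : B ≠ 0) :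
    ∃ A₁ B₁, A + B = A₁ + j ::ₘ B₁ ∧ card B = card B₁ + 1 ∧
      (A.map a).prod * (B.map b).prod = (A₁.map a).prod * ((j ::ₘ B₁).map b).prod := by
  rcases mem_add.1 hj with hjA | hjB
  · obtain ⟨A₀, rfl⟩ := exists_cons_of_mem hjA
    obtain ⟨i, hi⟩ := exists_mem_of_ne_zero hB
    obtain ⟨B₁, rfl⟩ := exists_cons_of_mem hi
    refine ⟨i ::ₘ A₀, B₁, by simp only [cons_add, add_cons, cons_swap], by simp, ?_⟩
    simp only [map_cons, prod_cons]
    rw [mul_mul_mul_comm, hab j i, mul_mul_mul_comm]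
  · obtain ⟨B₁, rfl⟩ := exists_cons_of_mem hjB
    exact ⟨A, B₁, rfl, by simp, rfl⟩

theorem prod_map_mul_prod_map_eq_of_add_eq_of_card_eq (hab : ∀ i j, a i * b j = a j * b i)
    {A B A' B' : Multiset σ} (hsum : A + B = A' + B') (hcard : card B = card B') :
    (A.map a).prod * (B.map b).prod = (A'.map a).prod * (B'.map b).prod := by
  induction B' using Multiset.induction_on generalizing A B A' with
  | empty =>
    obtain rfl : B = 0 := card_eq_zero.1 hcard
    simp_all
  | cons j B' ih =>
    obtain ⟨A₁, B₁, hsum₁, hcard₁, hprod⟩ :=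
      exists_add_cons_eq_and_prod_map_mul_prod_map_eq hab
        (hsum ▸ mem_add.2 (Or.inr (mem_cons_self j B'))) (by rintro rfl; simp at hcard)
    have hprod₁ := ih (A := A₁) (B := B₁) (A' := A') (by simpa [hsum₁] using hsum)
      (by simpa [hcard₁] using hcard)
    rw [hprod, map_cons, map_cons, prod_cons, prod_cons, mul_left_comm, hprod₁, mul_left_comm]

theorem exists_disjSum_eq {α β : Type*} (S : Multiset (α ⊕ β)) :
    ∃ (s : Multiset α) (t : Multiset β), s.disjSum t = S := by
  induction S using Multiset.induction_on with
  | empty => exact ⟨0, 0, by simp [disjSum]⟩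
  | cons x S ih =>
    obtain ⟨s, t, rfl⟩ := ih
    cases x with
    | inl a => exact ⟨a ::ₘ s, t, by simp [disjSum]⟩
    | inr b => exact ⟨s, b ::ₘ t, by simp [disjSum]⟩

end Multiset

theorem MvPolynomial.prod_map_X {R τ : Type*} [CommSemiring R] [DecidableEq τ] (S : Multiset τ) :
    (S.map X).prod = (monomial (toFinsupp S) 1 : MvPolynomial τ R) := by
  induction S using Multiset.induction_on with
  | empty => simp
  | cons x S ih =>
    rw [map_cons, prod_cons, ih, ← singleton_add, toFinsupp_add, toFinsupp_singleton, X,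
      monomial_mul, one_mul]

section Minors

variable (R σ : Type*) [CommRing R]

noncomputable def minorsIdeal : Ideal (MvPolynomial (σ ⊕ σ) R) :=
  Ideal.span {p | ∃ i j, p = X (.inl i) * X (.inr j) - X (.inl j) * X (.inr i)}

noncomputable def minorsParam : MvPolynomial (σ ⊕ σ) R →ₐ[R] MvPolynomial (Option σ) R :=
  aeval (Sum.elim (fun i => X (some i)) (fun i => X none * X (some i)))

def minorsParamExponent (A B : Multiset σ) : Multiset (Option σ) :=
  replicate (card B) none + (A + B).map some

variable {σ}

noncomputable def xyMonomial (A B : Multiset σ) : MvPolynomial (σ ⊕ σ) R :=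
  ((A.disjSum B).map X).prod

variable {R}

theorem exists_monomial_eq_xyMonomial (e : σ ⊕ σ →₀ ℕ) :
    ∃ A B, monomial e 1 = xyMonomial R A B := by
  classical
  obtain ⟨A, B, hAB⟩ := exists_disjSum_eq e.toMultiset
  exact ⟨A, B, by rw [xyMonomial, prod_map_X, hAB, Finsupp.toMultiset_toFinsupp]⟩

theorem minorsParam_xyMonomial (A B : Multiset σ) :
    minorsParam R σ (xyMonomial R A B) = ((minorsParamExponent σ A B).map X).prod := by
  simp only [xyMonomial, minorsParamExponent, minorsParam, map_disjSum, prod_add, map_mul,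
    map_multiset_prod, Multiset.map_add, Multiset.map_map, Function.comp_def, aeval_X,
    Sum.elim_inl, Sum.elim_inr, prod_map_mul, map_const', map_replicate, prod_replicate]
  ring

theorem eq_of_minorsParamExponent_eq {A B A' B' : Multiset σ}
    (h : minorsParamExponent σ A B = minorsParamExponent σ A' B') :
    A + B = A' + B' ∧ card B = card B' := by
  classical
  have hcard : card B = card B' := by
    simpa [minorsParamExponent] using congr_arg (count none) h
  rw [minorsParamExponent, minorsParamExponent, hcard, add_right_inj] at h
  exact ⟨map_injective (Option.some_injective σ) h, hcard⟩

theorem mk_xyMonomial_eq {A B A' B' : Multiset σ} (hsum : A + B = A' + B')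
    (hcard : card B = card B') :
    Ideal.Quotient.mk (minorsIdeal R σ) (xyMonomial R A B) =
      Ideal.Quotient.mk (minorsIdeal R σ) (xyMonomial R A' B') := by
  simp only [xyMonomial, map_disjSum, prod_add, map_mul, map_multiset_prod, Multiset.map_map,
    Function.comp_def]
  refine prod_map_mul_prod_map_eq_of_add_eq_of_card_eq (fun i j => ?_) hsum hcard
  rw [← map_mul, ← map_mul, Ideal.Quotient.eq]
  exact Ideal.subset_span ⟨i, j, rfl⟩

open Function

theorem factorsThrough_minorsParamExponent :
    (uncurry fun A B => Ideal.Quotient.mk (minorsIdeal R σ) (xyMonomial R A B)).FactorsThrough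
      (uncurry (minorsParamExponent σ)) := by
  rintro ⟨A, B⟩ ⟨A', B'⟩ h
  obtain ⟨hsum, hcard⟩ := eq_of_minorsParamExponent_eq h
  exact mk_xyMonomial_eq hsum hcard

variable (R σ) in
noncomputable def minorsSectionMonomial :
    Multiset (Option σ) → MvPolynomial (σ ⊕ σ) R ⧸ minorsIdeal R σ :=
  extend (uncurry (minorsParamExponent σ))
    (uncurry fun A B => Ideal.Quotient.mk _ (xyMonomial R A B)) 0

variable (R σ) in
noncomputable def minorsSection :
    MvPolynomial (Option σ) R →ₗ[R] MvPolynomial (σ ⊕ σ) R ⧸ minorsIdeal R σ :=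
  (basisMonomials (Option σ) R).constr R fun w => minorsSectionMonomial R σ (Finsupp.toMultiset w)

theorem minorsSection_prod_map_X (S : Multiset (Option σ)) :
    minorsSection R σ (S.map X).prod = minorsSectionMonomial R σ S := by
  classical
  have h := (basisMonomials (Option σ) R).constr_basis R
    (fun w => minorsSectionMonomial R σ (Finsupp.toMultiset w)) (toFinsupp S)
  rw [coe_basisMonomials, toFinsupp_toMultiset] at h
  rw [prod_map_X]
  exact h

theorem minorsSection_comp_minorsParam :
    minorsSection R σ ∘ₗ (minorsParam R σ).toLinearMap =
      (Ideal.Quotient.mkₐ R (minorsIdeal R σ)).toLinearMap := by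
  refine linearMap_ext fun e => LinearMap.ext_ring ?_
  obtain ⟨A, B, he⟩ := exists_monomial_eq_xyMonomial (R := R) e
  simp only [LinearMap.coe_comp, comp_apply, AlgHom.toLinearMap_apply]
  rw [he, minorsParam_xyMonomial, minorsSection_prod_map_X]
  exact factorsThrough_minorsParamExponent.extend_apply _ (A, B)

theorem minorsIdeal_eq_ker : minorsIdeal R σ = RingHom.ker (minorsParam R σ) := by
  refine le_antisymm (Ideal.span_le.2 ?_) fun f hf => ?_
  · rintro _ ⟨i, j, rfl⟩
    simp only [SetLike.mem_coe, RingHom.mem_ker, map_sub, map_mul, minorsParam, aeval_X,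
      Sum.elim_inl, Sum.elim_inr]
    ring
  · have hf' := LinearMap.congr_fun minorsSection_comp_minorsParam f
    simp only [LinearMap.coe_comp, comp_apply, AlgHom.toLinearMap_apply,
      RingHom.mem_ker.1 hf, Ideal.Quotient.mkₐ_eq_mk] at hf'
    exact Ideal.Quotient.eq_zero_iff_mem.1 hf'.symm

theorem minorsIdeal_isPrime [IsDomain R] : (minorsIdeal R σ).IsPrime := by
  rw [minorsIdeal_eq_ker]
  exact RingHom.ker_isPrime _

end Minors

theorem minors_ideal_isPrime_general (k : Type*) [Field k] (n : ℕ) :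
    (Ideal.span { p : MvPolynomial (Fin n ⊕ Fin n) k |
        ∃ i j : Fin n,
          p = MvPolynomial.X (Sum.inl i) * MvPolynomial.X (Sum.inr j) -
              MvPolynomial.X (Sum.inl j) * MvPolynomial.X (Sum.inr i) }).IsPrime :=
  minorsIdeal_isPrime

/-- The ideal of 2×2 minors of the generic 2×n matrix over a field is prime. -/
theorem minors_ideal_isPrime (k : Type*) [Field k] (n : ℕ) (hn : 1 ≤ n) :
    (Ideal.span { p : MvPolynomial (Fin n ⊕ Fin n) k |
        ∃ i j : Fin n,
          p = MvPolynomial.X (Sum.inl i) * MvPolynomial.X (Sum.inr j) -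
              MvPolynomial.X (Sum.inl j) * MvPolynomial.X (Sum.inr i) }).IsPrime :=
  minors_ideal_isPrime_general k n
end

section
/- Let A = ℤ × ℤ × ℤ be the free abelian group with basis elements c = (1,0,0), u = (0,1,0), v = (0,0,1), and let H be the subgroup of A generated by the two elements 33·u + 34·v − 42·c and c − u − v. Then the quotient group A/H is an infinite cyclic group (free abelian of rank 1) generated by the image of c. (This is the computation in the proof of Theorem 3.9 that Pic(M_4) = Pic(F^3_{2,3})/⟨c_1 − u − v⟩ is freely generated by c_1 = λ_1, where Pic(F^3_{2,3}) = ℤ⟨c_1,u,v⟩/⟨33u + 34v − 42c_1⟩.) -/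
/-! Modulo `c = u + v` the relation `42c = 33u + 34v` becomes `9u + 8v = 0`, so the quotient is
generated by `w` with `u = -8w`, `v = 9w`, `c = w`. Accordingly `(a, b, d) ↦ a - 8b + 9d` kills
both relations and sends `c` to `1`, which gives torsion-freeness, while every triple differs
from a multiple of `c` by an explicit combination of the relations. -/

namespace QuotientAddGroup

variable {A : Type*} [AddCommGroup A] {H : AddSubgroup A} {c : A}

theorem exists_zsmul_mk'_eq_of_forall_exists_sub_mem (h : ∀ p : A, ∃ k : ℤ, p - k • c ∈ H)
    (x : A ⧸ H) : ∃ k : ℤ, k • mk' H c = x := by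
  induction x using QuotientAddGroup.induction_on with
  | H p =>
    obtain ⟨k, hk⟩ := h p
    refine ⟨k, ?_⟩
    rw [mk'_apply, ← mk_zsmul, eq_comm, eq_iff_sub_mem]
    exact hk

theorem eq_zero_of_zsmul_mk'_eq_zero {φ : A →+ ℤ} (hH : H ≤ φ.ker) (hc : φ c = 1) {k : ℤ}
    (hk : k • mk' H c = 0) : k = 0 := by
  rw [mk'_apply, ← mk_zsmul, eq_zero_iff] at hk
  simpa [hc] using hH hk

end QuotientAddGroup

def picCoord : ℤ × ℤ × ℤ →+ ℤ where
  toFun p := p.1 - 8 * p.2.1 + 9 * p.2.2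
  map_zero' := rfl
  map_add' p q := by simp only [Prod.fst_add, Prod.snd_add]; ring

/-- Pic(M₄) is free abelian of rank 1, generated by the image of c = λ₁: the quotient
of ℤ³ by ⟨33u + 34v − 42c, c − u − v⟩ is infinite cyclic on the image of c. -/
theorem pic_M4 :
    let c : ℤ × ℤ × ℤ := (1, 0, 0)
    let u : ℤ × ℤ × ℤ := (0, 1, 0)
    let v : ℤ × ℤ × ℤ := (0, 0, 1)
    let H : AddSubgroup (ℤ × ℤ × ℤ) :=
      AddSubgroup.closure {(33 : ℤ) • u + (34 : ℤ) • v - (42 : ℤ) • c, c - u - v}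
    (∀ x : (ℤ × ℤ × ℤ) ⧸ H, ∃ k : ℤ, k • (QuotientAddGroup.mk' H c) = x) ∧
      ∀ k : ℤ, k • (QuotientAddGroup.mk' H c) = 0 → k = 0 := by
  intro c u v H
  have hr : (33 : ℤ) • u + (34 : ℤ) • v - (42 : ℤ) • c ∈ H := AddSubgroup.subset_closure (by simp)
  have hs : c - u - v ∈ H := AddSubgroup.subset_closure (by simp)
  refine ⟨QuotientAddGroup.exists_zsmul_mk'_eq_of_forall_exists_sub_mem fun p => ?_,
    fun k => QuotientAddGroup.eq_zero_of_zsmul_mk'_eq_zero (φ := picCoord) ?_ rfl⟩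
  · have hp : p - picCoord p • c =
        (p.2.2 - p.2.1) • ((33 : ℤ) • u + (34 : ℤ) • v - (42 : ℤ) • c) +
          (33 * p.2.2 - 34 * p.2.1) • (c - u - v) := by
      ext <;> simp [picCoord, c, u, v] <;> ring
    exact ⟨_, hp ▸ add_mem (AddSubgroup.zsmul_mem _ hr _) (AddSubgroup.zsmul_mem _ hs _)⟩
  · rw [AddSubgroup.closure_le]
    rintro g (rfl | rfl) <;> rfl
end

section
/- Let A = ℤ × ℤ be the free abelian group with basis elements c = (1,0) and s = (0,1), let H be the subgroup of A generated by 27·s − 36·c and c − s, and let q : A → A/H be the quotient map. Then 9 · q(c) = 0 in A/H, and for every integer 0 < m < 9, m · q(c) ≠ 0. (This pins down, in the proof of Theorem 3.4 and Corollary 3.5, that the image of c_1 = λ_1 in Pic(U_3) has exact order 9, so that the hyperelliptic divisor class satisfies [H_3] = 9·λ_1.) -/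
/-!
The homomorphism `(a, b) ↦ a + b mod 9` kills both generators of `H`, so it factors through
`A/H` and sends `q(c)` to `1 : ZMod 9`; hence no `m` with `0 < m < 9` kills `q(c)`. Conversely
`9 • c = (36 • c - 27 • s) - 27 • (c - s)` lies in `H`.
-/

open QuotientAddGroup

theorem zsmul_mk'_ne_zero_of_le_ker {A B : Type*} [AddGroup A] [AddGroup B] {H : AddSubgroup A}
    [H.Normal] (f : A →+ B) (hH : H ≤ f.ker) {x : A} {m : ℤ} (hm : m • f x ≠ 0) :
    m • mk' H x ≠ 0 := by
  rw [← map_zsmul] at hm ⊢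
  exact fun h => hm (hH (by rwa [← ker_mk' H, AddMonoidHom.mem_ker]))

/-- The image of c = λ₁ in Pic(U₃) = ℤ²/⟨27s − 36c, c − s⟩ has exact order 9. -/
theorem order_of_lambda1_U3 :
    let c : ℤ × ℤ := (1, 0)
    let s : ℤ × ℤ := (0, 1)
    let H : AddSubgroup (ℤ × ℤ) :=
      AddSubgroup.closure {(27 : ℤ) • s - (36 : ℤ) • c, c - s}
    (9 : ℤ) • (QuotientAddGroup.mk' H c) = 0 ∧
      ∀ m : ℤ, 0 < m → m < 9 → m • (QuotientAddGroup.mk' H c) ≠ 0 := by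
  intro c s H
  have hrel : (27 : ℤ) • s - (36 : ℤ) • c ∈ H := AddSubgroup.subset_closure (.inl rfl)
  have hcs : c - s ∈ H := AddSubgroup.subset_closure (.inr rfl)
  refine ⟨?_, fun m hm0 hm9 => ?_⟩
  · have h9 : (9 : ℤ) • c = -((27 : ℤ) • s - (36 : ℤ) • c) + (-27 : ℤ) • (c - s) := by
      decide
    rw [← map_zsmul, ← AddMonoidHom.mem_ker, ker_mk', h9]
    exact H.add_mem (H.neg_mem hrel) (H.zsmul_mem hcs _)
  · let f : ℤ × ℤ →+ ZMod 9 := (Int.castAddHom _).coprod (Int.castAddHom _)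
    have hker : H ≤ f.ker := (AddSubgroup.closure_le _).2 <| by
      rintro _ (rfl | rfl) <;> rw [SetLike.mem_coe, AddMonoidHom.mem_ker] <;> decide
    refine zsmul_mk'_ne_zero_of_le_ker f hker ?_
    have hfc : m • f c = (m : ZMod 9) := by simp [f, c]
    rw [hfc, Ne, ZMod.intCast_zmod_eq_zero_iff_dvd]
    omega
end
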